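/- Suppose Y and C are independent with atomless laws. Then for every y ∈ ℝ with ℙ(Q > y) > 0, the survival function of the latent outcome Y is identified from the joint distribution of the observables (Q, δ): ℙ(Y > y) = exp(−∫_{(-∞,y]} (ℙ(Q ≥ s))⁻¹ dν₁(s)). (This is the full identification content of Proposition 1 in the continuous case: exponentiating the observable cumulative hazard recovers the distribution of Y.) -/

import Mathlib

/-!
By independence, `P(Q ≥ s) = P(Y ≥ s) P(C ≥ s)`, and `ν₁` is the law of `Y` weighted by the
density `s ↦ P(C ≥ s)`; so the censoring factors cancel and the observable cumulative hazard is
`∫_{(-∞,y]} dF(s) / (1 - F(s))` with `F` the distribution function of `Y`. As the law of `Y` has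
no atoms, `F` is continuous and pushes that law forward to the uniform law on `[0, 1]`, so the
hazard equals `∫₀^{F(y)} du / (1 - u) = -log (1 - F(y)) = -log P(Y > y)`.
-/

open MeasureTheory ProbabilityTheory Set Filter
open scoped ENNReal

lemma Set.Iic_inter_Icc {α : Type*} [LinearOrder α] {a b u : α} :
    Iic u ∩ Icc a b = Icc a (min u b) := by
  ext; simp only [mem_inter_iff, mem_Iic, mem_Icc, le_min_iff]; tauto

lemma lintegral_Icc_inv_one_sub {a : ℝ} (ha₀ : 0 ≤ a) (ha₁ : a < 1) :
    ∫⁻ u in Icc 0 a, (ENNReal.ofReal (1 - u))⁻¹ = ENNReal.ofReal (-Real.log (1 - a)) := by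
  have hpos : ∀ u ∈ Icc 0 a, 0 < 1 - u := fun u hu => by linarith [hu.2]
  have hint : IntegrableOn (fun u : ℝ => (1 - u)⁻¹) (Icc 0 a) :=
    (continuousOn_const.sub continuousOn_id).inv₀ (fun u hu => (hpos u hu).ne')
      |>.integrableOn_Icc
  have hnn : 0 ≤ᵐ[volume.restrict (Icc 0 a)] fun u : ℝ => (1 - u)⁻¹ :=
    (ae_restrict_iff' measurableSet_Icc).2 <|
      Eventually.of_forall fun u hu => inv_nonneg.2 (hpos u hu).le
  have h0 : (0 : ℝ) ∉ uIcc (1 - a) (1 - 0) := by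
    rw [uIcc_of_le (by linarith)]; exact fun h => by linarith [h.1]
  calc ∫⁻ u in Icc 0 a, (ENNReal.ofReal (1 - u))⁻¹
      = ∫⁻ u in Icc 0 a, ENNReal.ofReal (1 - u)⁻¹ :=
        setLIntegral_congr_fun measurableSet_Icc fun u hu =>
          (ENNReal.ofReal_inv_of_pos (hpos u hu)).symm
    _ = ENNReal.ofReal (∫ u in 0..a, (1 - u)⁻¹) := by
        rw [← ofReal_integral_eq_lintegral_ofReal hint hnn, integral_Icc_eq_integral_Ioc,
          intervalIntegral.integral_of_le ha₀]
    _ = ENNReal.ofReal (-Real.log (1 - a)) := by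
        rw [intervalIntegral.integral_comp_sub_left (fun x => x⁻¹), integral_inv h0, sub_zero,
          one_div, Real.log_inv]

namespace ProbabilityTheory

variable {μ : Measure ℝ} [IsProbabilityMeasure μ] [NullSingletonClass μ]

lemma continuous_cdf : Continuous (cdf μ) := by
  refine continuous_iff_continuousAt.2 fun x => ?_
  rw [(monotone_cdf μ).continuousAt_iff_leftLim_eq_rightLim, StieltjesFunction.rightLim_eq]
  have hjump := (cdf μ).measure_singleton x
  rw [measure_cdf, measure_singleton, eq_comm, ENNReal.ofReal_eq_zero, sub_nonpos] at hjump
  exact le_antisymm ((monotone_cdf μ).leftLim_le le_rfl) hjump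

lemma measure_cdf_preimage_Iic {u : ℝ} (hu₀ : 0 ≤ u) (hu₁ : u < 1) :
    μ (cdf μ ⁻¹' Iic u) = ENNReal.ofReal u := by
  set A := cdf μ ⁻¹' Iic u
  have hbdd : BddAbove A := by
    obtain ⟨t, ht⟩ := ((tendsto_cdf_atTop μ).eventually_const_lt hu₁).exists
    exact ⟨t, fun s hs => ((monotone_cdf μ).reflect_lt (lt_of_le_of_lt hs ht)).le⟩
  refine le_antisymm ?_ ?_
  · rcases A.eq_empty_or_nonempty with hA | hA
    · simp [hA]
    have hmem : sSup A ∈ A := (isClosed_Iic.preimage continuous_cdf).csSup_mem hA hbdd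
    calc μ A ≤ μ (Iic (sSup A)) := measure_mono fun s hs => le_csSup hbdd hs
      _ = ENNReal.ofReal (cdf μ (sSup A)) := (ofReal_cdf μ _).symm
      _ ≤ ENNReal.ofReal u := ENNReal.ofReal_le_ofReal hmem
  · rcases hu₀.eq_or_lt with rfl | hu₀
    · simp
    obtain ⟨z, hz⟩ : u ∈ range (cdf μ) :=
      mem_range_of_exists_le_of_exists_ge continuous_cdf
        (((tendsto_cdf_atBot μ).eventually_lt_const hu₀).exists.imp fun _ => le_of_lt)
        (((tendsto_cdf_atTop μ).eventually_const_lt hu₁).exists.imp fun _ => le_of_lt)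
    calc ENNReal.ofReal u = μ (Iic z) := by rw [← hz, ofReal_cdf]
      _ ≤ μ A := measure_mono fun s hs => (hz ▸ monotone_cdf μ hs : cdf μ s ≤ u)

lemma map_cdf_eq_volume_restrict_Icc : μ.map (cdf μ) = volume.restrict (Icc 0 1) := by
  have hF : Measurable (cdf μ) := (monotone_cdf μ).measurable
  have : IsProbabilityMeasure (μ.map (cdf μ)) := Measure.isProbabilityMeasure_map hF.aemeasurable
  refine Measure.ext_of_Iic _ _ fun u => ?_
  rw [Measure.map_apply hF measurableSet_Iic, Measure.restrict_apply measurableSet_Iic,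
    Iic_inter_Icc, Real.volume_Icc, sub_zero]
  rcases lt_or_ge u 0 with hu | hu₀
  · have hempty : cdf μ ⁻¹' Iic u = ∅ :=
      eq_empty_of_forall_notMem fun s hs => by linarith [cdf_nonneg μ s, show cdf μ s ≤ u from hs]
    rw [hempty, measure_empty, ENNReal.ofReal_of_nonpos (by simp [hu.le])]
  rcases lt_or_ge u 1 with hu₁ | hu₁
  · rw [measure_cdf_preimage_Iic hu₀ hu₁, min_eq_left hu₁.le]
  · have huniv : cdf μ ⁻¹' Iic u = univ :=
      eq_univ_of_forall fun s => (cdf_le_one μ s).trans hu₁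
    rw [huniv, measure_univ, min_eq_right hu₁, ENNReal.ofReal_one]

lemma measure_Ici_eq_ofReal_one_sub_cdf (s : ℝ) : μ (Ici s) = ENNReal.ofReal (1 - cdf μ s) := by
  rw [← measure_congr Ioi_ae_eq_Ici, ← compl_Iic, prob_compl_eq_one_sub measurableSet_Iic,
    ← ofReal_cdf, ENNReal.ofReal_sub 1 (cdf_nonneg μ s), ENNReal.ofReal_one]

lemma setLIntegral_Iic_comp_cdf {g : ℝ → ℝ≥0∞} (hg : Measurable g) (y : ℝ) :
    ∫⁻ s in Iic y, g (cdf μ s) ∂μ = ∫⁻ u in Icc 0 (cdf μ y), g u := by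
  have hF : Measurable (cdf μ) := (monotone_cdf μ).measurable
  have hIcc : Iic (cdf μ y) ∩ Icc 0 1 = Icc 0 (cdf μ y) := by
    rw [Iic_inter_Icc, min_eq_left (cdf_le_one μ y)]
  have hae : Iic y =ᵐ[μ] cdf μ ⁻¹' Iic (cdf μ y) := by
    refine ae_eq_of_subset_of_measure_ge (fun s hs => monotone_cdf μ hs) ?_
      measurableSet_Iic.nullMeasurableSet (measure_ne_top _ _)
    rw [← Measure.map_apply hF measurableSet_Iic, map_cdf_eq_volume_restrict_Icc,
      Measure.restrict_apply measurableSet_Iic, hIcc, Real.volume_Icc, sub_zero, ofReal_cdf]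
  calc ∫⁻ s in Iic y, g (cdf μ s) ∂μ = ∫⁻ s in cdf μ ⁻¹' Iic (cdf μ y), g (cdf μ s) ∂μ :=
        setLIntegral_congr hae
    _ = ∫⁻ u in Iic (cdf μ y), g u ∂(μ.map (cdf μ)) :=
        (setLIntegral_map measurableSet_Iic hg hF).symm
    _ = ∫⁻ u in Icc 0 (cdf μ y), g u := by
        rw [map_cdf_eq_volume_restrict_Icc, Measure.restrict_restrict measurableSet_Iic, hIcc]

lemma setLIntegral_Iic_inv_measure_Ici {y : ℝ} (hy : μ (Ici y) ≠ 0) :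
    ∫⁻ s in Iic y, (μ (Ici s))⁻¹ ∂μ = ENNReal.ofReal (-Real.log (μ (Ici y)).toReal) := by
  have hy₁ : cdf μ y < 1 := by
    rwa [measure_Ici_eq_ofReal_one_sub_cdf, Ne, ENNReal.ofReal_eq_zero, not_le, sub_pos] at hy
  simp_rw [measure_Ici_eq_ofReal_one_sub_cdf]
  rw [setLIntegral_Iic_comp_cdf (g := fun u => (ENNReal.ofReal (1 - u))⁻¹) (by fun_prop) y,
    lintegral_Icc_inv_one_sub (cdf_nonneg μ y) hy₁,
    ENNReal.toReal_ofReal (sub_nonneg.2 (cdf_le_one μ y))]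

lemma measure_Ioi_eq_ofReal_exp_neg_setLIntegral {y : ℝ} (hy : μ (Ioi y) ≠ 0) :
    μ (Ioi y) = ENNReal.ofReal (Real.exp (-(∫⁻ s in Iic y, (μ (Ici s))⁻¹ ∂μ).toReal)) := by
  rw [measure_congr Ioi_ae_eq_Ici] at hy ⊢
  have hpos : 0 < (μ (Ici y)).toReal := ENNReal.toReal_pos hy (measure_ne_top _ _)
  rw [setLIntegral_Iic_inv_measure_Ici hy, ENNReal.toReal_ofReal
      (neg_nonneg.2 (Real.log_nonpos hpos.le measureReal_le_one)), neg_neg, Real.exp_log hpos,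
    ENNReal.ofReal_toReal (measure_ne_top _ _)]

end ProbabilityTheory

namespace ProbabilityTheory.IndepFun

variable {Ω : Type*} [MeasurableSpace Ω] {P : Measure Ω} {Y C : Ω → ℝ}

lemma measure_le_min (hY : Measurable Y) (hC : Measurable C) (hindep : IndepFun Y C P) (s : ℝ) :
    P {ω | s ≤ min (Y ω) (C ω)} = P.map Y (Ici s) * P.map C (Ici s) := by
  have hset : {ω | s ≤ min (Y ω) (C ω)} = Y ⁻¹' Ici s ∩ C ⁻¹' Ici s := by ext; simp
  rw [hset, hindep.measure_inter_preimage_eq_mul _ _ measurableSet_Ici measurableSet_Ici,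
    Measure.map_apply hY measurableSet_Ici, Measure.map_apply hC measurableSet_Ici]

lemma measure_lt_min (hY : Measurable Y) (hC : Measurable C) (hindep : IndepFun Y C P) (s : ℝ) :
    P {ω | s < min (Y ω) (C ω)} = P.map Y (Ioi s) * P.map C (Ioi s) := by
  have hset : {ω | s < min (Y ω) (C ω)} = Y ⁻¹' Ioi s ∩ C ⁻¹' Ioi s := by ext; simp
  rw [hset, hindep.measure_inter_preimage_eq_mul _ _ measurableSet_Ioi measurableSet_Ioi,
    Measure.map_apply hY measurableSet_Ioi, Measure.map_apply hC measurableSet_Ioi]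

lemma map_min_restrict_le [IsFiniteMeasure P] (hY : Measurable Y) (hC : Measurable C)
    (hindep : IndepFun Y C P) :
    (P.restrict {ω | Y ω ≤ C ω}).map (fun ω => min (Y ω) (C ω))
      = (P.map Y).withDensity fun s => P.map C (Ici s) := by
  ext A hA
  set S : Set (ℝ × ℝ) := {p | p.1 ∈ A ∧ p.1 ≤ p.2}
  have hS : MeasurableSet S :=
    (measurable_fst hA).inter (measurableSet_le measurable_fst measurable_snd)
  have hset : (fun ω => min (Y ω) (C ω)) ⁻¹' A ∩ {ω | Y ω ≤ C ω}
      = (fun ω => (Y ω, C ω)) ⁻¹' S := by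
    ext ω
    simp only [mem_inter_iff, mem_preimage, mem_ofPred_eq, S]
    exact ⟨fun ⟨h, hle⟩ => ⟨min_eq_left hle ▸ h, hle⟩,
      fun ⟨h, hle⟩ => ⟨(min_eq_left hle).symm ▸ h, hle⟩⟩
  have hslice : ∀ a, P.map C (Prod.mk a ⁻¹' S) = A.indicator (fun a => P.map C (Ici a)) a := by
    intro a
    by_cases ha : a ∈ A
    · simp [S, ha, Ici_def]
    · simp [S, ha]
  rw [Measure.map_apply (hY.min hC) hA, Measure.restrict_apply (hY.min hC hA), hset,
    ← Measure.map_apply (hY.prodMk hC) hS,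
    (indepFun_iff_map_prod_eq_prod_map_map hY.aemeasurable hC.aemeasurable).1 hindep,
    Measure.prod_apply hS, withDensity_apply _ hA, ← lintegral_indicator hA]
  simp_rw [hslice]

lemma setLIntegral_inv_measure_le_min [IsFiniteMeasure P] (hY : Measurable Y) (hC : Measurable C)
    (hindep : IndepFun Y C P) {y : ℝ} (hCy : P.map C (Ici y) ≠ 0) :
    ∫⁻ s in Iic y, (P {ω | s ≤ min (Y ω) (C ω)})⁻¹
        ∂((P.restrict {ω | Y ω ≤ C ω}).map fun ω => min (Y ω) (C ω))
      = ∫⁻ s in Iic y, (P.map Y (Ici s))⁻¹ ∂(P.map Y) := by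
  have hanti : ∀ ν : Measure ℝ, Antitone fun s => ν (Ici s) :=
    fun ν _ _ hst => measure_mono (Ici_subset_Ici.2 hst)
  simp_rw [hindep.measure_le_min hY hC]
  rw [hindep.map_min_restrict_le hY hC, setLIntegral_withDensity_eq_setLIntegral_mul _
    (g := fun s => (P.map Y (Ici s) * P.map C (Ici s))⁻¹) (hanti _).measurable
    ((hanti _).measurable.mul (hanti _).measurable).inv measurableSet_Iic]
  refine setLIntegral_congr_fun measurableSet_Iic fun s hs => ?_
  have hCs : P.map C (Ici s) ≠ 0 := ne_bot_of_le_ne_bot hCy (hanti _ hs)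
  have hCs' : P.map C (Ici s) ≠ ∞ := measure_ne_top _ _
  rw [Pi.mul_apply, ENNReal.mul_inv (.inr hCs') (.inr hCs), mul_left_comm,
    ENNReal.mul_inv_cancel hCs hCs', mul_one]

end ProbabilityTheory.IndepFun

theorem kaplan_meier_identification_continuous_general
    {Ω : Type*} [MeasurableSpace Ω] (P : Measure Ω) [IsProbabilityMeasure P]
    (Y C : Ω → ℝ) (hY : Measurable Y) (hC : Measurable C)
    (hindep : IndepFun Y C P)
    (hYatomless : ∀ a : ℝ, P {ω | Y ω = a} = 0)
    (y : ℝ) (hy : 0 < P {ω | y < min (Y ω) (C ω)}) :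
    P {ω | y < Y ω}
      = ENNReal.ofReal (Real.exp
          (-(∫⁻ s in Iic y, (P {ω | s ≤ min (Y ω) (C ω)})⁻¹
              ∂(Measure.map (fun ω => min (Y ω) (C ω))
                  (P.restrict {ω | Y ω ≤ C ω}))).toReal)) := by
  have : IsProbabilityMeasure (P.map Y) := Measure.isProbabilityMeasure_map hY.aemeasurable
  have : NullSingletonClass (P.map Y) :=
    ⟨fun a => by rw [Measure.map_apply hY (measurableSet_singleton a)]; exact hYatomless a⟩
  rw [hindep.measure_lt_min hY hC] at hy
  have hYy : P.map Y (Ioi y) ≠ 0 := left_ne_zero_of_mul hy.ne'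
  have hCy : P.map C (Ici y) ≠ 0 :=
    ne_bot_of_le_ne_bot (right_ne_zero_of_mul hy.ne') (measure_mono Ioi_subset_Ici_self)
  rw [hindep.setLIntegral_inv_measure_le_min hY hC hCy,
    ← measure_Ioi_eq_ofReal_exp_neg_setLIntegral hYy, Measure.map_apply hY measurableSet_Ioi]
  rfl

/-- Suppose the latent outcome `Y` and the censoring variable `C` are
independent with atomless laws. Then for every `y` with `P(Q > y) > 0` (where
`Q = min(Y, C)`), the survival function of the latent outcome is identified from the joint
distribution of the observables:
`P(Y > y) = exp(−∫_{(-∞,y]} (P(Q ≥ s))⁻¹ dν₁(s))`, where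
`ν₁(A) = P(Q ∈ A, Y ≤ C)` is the uncensored sub-distribution measure — exponentiating the
observable cumulative hazard recovers the distribution of `Y`. -/
theorem kaplan_meier_identification_continuous
    {Ω : Type*} [MeasurableSpace Ω] (P : Measure Ω) [IsProbabilityMeasure P]
    (Y C : Ω → ℝ) (hY : Measurable Y) (hC : Measurable C)
    (hindep : IndepFun Y C P)
    (hYatomless : ∀ a : ℝ, P {ω | Y ω = a} = 0)
    (hCatomless : ∀ c : ℝ, P {ω | C ω = c} = 0)
    (y : ℝ) (hy : 0 < P {ω | y < min (Y ω) (C ω)}) :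
    P {ω | y < Y ω}
      = ENNReal.ofReal (Real.exp
          (-(∫⁻ s in Iic y, (P {ω | s ≤ min (Y ω) (C ω)})⁻¹
              ∂(Measure.map (fun ω => min (Y ω) (C ω))
                  (P.restrict {ω | Y ω ≤ C ω}))).toReal)) :=
  kaplan_meier_identification_continuous_general P Y C hY hC hindep hYatomless y hy
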